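/- Let Δ and Δ' be two complete fans in R^2. Then there exists a complete fan Δ'' refining both Δ and Δ', and Δ'' may be chosen regular. -/

import Mathlib

/-!
Work with integer vectors and the determinant `det2`. A sector of the first fan is cut at the
rays of the second fan lying strictly inside it, by induction on their number; a sector with no
such ray lies in the sector of the second fan that contains the sum of its generators. A sector
`[u, v]` with primitive generators is made regular by inserting a primitive `w` with
`det2 u w = 1` and `0 < det2 w v < det2 u v`: starting from a Bézout vector `w₀` with
`det2 u w₀ = 1`, take `w = w₀ - k • u` with `k` the quotient of `det2 w₀ v` by `det2 u v`; the
remainder `det2 w v` is nonzero because `v` is primitive. Recursing on `det2 w v` and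
concatenating the resulting chains of rays around the circle gives the common regular
refinement.
-/

/-- The closed rational sector in ℝ² generated by `u, v ∈ ℤ²`. -/
def secR (u v : ℤ × ℤ) : Set (ℝ × ℝ) :=
  {x | ∃ s t : ℝ, 0 ≤ s ∧ 0 ≤ t ∧
    x.1 = s * (u.1 : ℝ) + t * (v.1 : ℝ) ∧ x.2 = s * (u.2 : ℝ) + t * (v.2 : ℝ)}

/-- A complete fan in ℝ², given by `d ≥ 1` primitive rays `v 0, …, v d = v 0` in
counterclockwise order whose consecutive sectors cover ℝ². -/
def IsCompleteFan (d : ℕ) (v : ℕ → ℤ × ℤ) : Prop :=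
  1 ≤ d ∧ v d = v 0 ∧
  (∀ i ≤ d, IsCoprime (v i).1 (v i).2) ∧
  (∀ i < d, 0 < (v i).1 * (v (i+1)).2 - (v i).2 * (v (i+1)).1) ∧
  (⋃ i ∈ Finset.range d, secR (v i) (v (i+1))) = Set.univ

/-- Fan `(d', v')` refines fan `(d, v)`: every sector of the first is contained in a
sector of the second. -/
def FanRefines (d' : ℕ) (v' : ℕ → ℤ × ℤ) (d : ℕ) (v : ℕ → ℤ × ℤ) : Prop :=
  ∀ i < d', ∃ j < d, secR (v' i) (v' (i+1)) ⊆ secR (v j) (v (j+1))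

def det2 (u v : ℤ × ℤ) : ℤ := u.1 * v.2 - u.2 * v.1

def toReal (a : ℤ × ℤ) : ℝ × ℝ := (a.1, a.2)

theorem det2_self (u : ℤ × ℤ) : det2 u u = 0 := by
  rw [det2, mul_comm, sub_self]

theorem det2_swap (u v : ℤ × ℤ) : det2 v u = -det2 u v := by
  simp only [det2]; ring

theorem det2_add_left (u v w : ℤ × ℤ) : det2 (u + v) w = det2 u w + det2 v w := by
  simp only [det2, Prod.fst_add, Prod.snd_add]; ring

theorem det2_add_right (u v w : ℤ × ℤ) : det2 u (v + w) = det2 u v + det2 u w := by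
  simp only [det2, Prod.fst_add, Prod.snd_add]; ring

theorem isCoprime_left_of_det2_eq_one {u v : ℤ × ℤ} (h : det2 u v = 1) :
    IsCoprime u.1 u.2 :=
  ⟨v.2, -v.1, by rw [← h, det2]; ring⟩

theorem isCoprime_right_of_det2_eq_one {u v : ℤ × ℤ} (h : det2 u v = 1) :
    IsCoprime v.1 v.2 :=
  ⟨-u.2, u.1, by rw [← h, det2]; ring⟩

theorem mem_secR_iff {u v : ℤ × ℤ} (huv : 0 < det2 u v) (x : ℝ × ℝ) :
    x ∈ secR u v ↔ 0 ≤ u.1 * x.2 - u.2 * x.1 ∧ 0 ≤ x.1 * v.2 - x.2 * v.1 := by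
  have hD : (0 : ℝ) < u.1 * v.2 - u.2 * v.1 := by exact_mod_cast huv
  constructor
  · rintro ⟨s, t, hs, ht, hx₁, hx₂⟩
    rw [hx₁, hx₂]
    constructor <;> nlinarith
  · rintro ⟨h₁, h₂⟩
    refine ⟨(x.1 * v.2 - x.2 * v.1) / (u.1 * v.2 - u.2 * v.1),
      (u.1 * x.2 - u.2 * x.1) / (u.1 * v.2 - u.2 * v.1),
      div_nonneg h₂ hD.le, div_nonneg h₁ hD.le, ?_, ?_⟩ <;>
    · rw [div_mul_eq_mul_div, div_mul_eq_mul_div, ← add_div, eq_div_iff hD.ne']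
      ring

theorem toReal_mem_secR_iff {u v a : ℤ × ℤ} (huv : 0 < det2 u v) :
    toReal a ∈ secR u v ↔ 0 ≤ det2 u a ∧ 0 ≤ det2 a v := by
  rw [mem_secR_iff huv]
  simp only [toReal, det2]
  norm_cast

theorem secR_subset_secR_of_mem {u v a b : ℤ × ℤ} (ha : toReal a ∈ secR u v)
    (hb : toReal b ∈ secR u v) : secR a b ⊆ secR u v := by
  obtain ⟨p, q, hp, hq, ha₁, ha₂⟩ := ha
  obtain ⟨p', q', hp', hq', hb₁, hb₂⟩ := hb
  rintro x ⟨s, t, hs, ht, hx₁, hx₂⟩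
  simp only [toReal] at ha₁ ha₂ hb₁ hb₂
  refine ⟨s * p + t * p', s * q + t * q', by positivity, by positivity, ?_, ?_⟩
  · rw [hx₁, ha₁, hb₁]; ring
  · rw [hx₂, ha₂, hb₂]; ring

theorem secR_subset_secR {u v a b : ℤ × ℤ} (huv : 0 < det2 u v)
    (hua : 0 ≤ det2 u a) (hav : 0 ≤ det2 a v) (hub : 0 ≤ det2 u b) (hbv : 0 ≤ det2 b v) :
    secR a b ⊆ secR u v :=
  secR_subset_secR_of_mem ((toReal_mem_secR_iff huv).2 ⟨hua, hav⟩)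
    ((toReal_mem_secR_iff huv).2 ⟨hub, hbv⟩)

theorem secR_eq_union {u v w : ℤ × ℤ} (huw : 0 < det2 u w) (hwv : 0 < det2 w v)
    (huv : 0 < det2 u v) : secR u v = secR u w ∪ secR w v := by
  refine subset_antisymm (fun x hx ↦ ?_) (Set.union_subset ?_ ?_)
  · rw [mem_secR_iff huv] at hx
    rw [Set.mem_union, mem_secR_iff huw, mem_secR_iff hwv]
    by_cases hwx : 0 ≤ w.1 * x.2 - w.2 * x.1
    · exact .inr ⟨hwx, hx.2⟩
    · exact .inl ⟨hx.1, by linarith⟩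
  · exact secR_subset_secR huv (det2_self u).ge huv.le huw.le hwv.le
  · exact secR_subset_secR huv huw.le hwv.le huv.le (det2_self v).ge

theorem isUnit_det2_of_det2_eq_zero {u v w : ℤ × ℤ} (huw : det2 u w = 1)
    (hwv : det2 w v = 0) (hv : IsCoprime v.1 v.2) : IsUnit (det2 u v) := by
  obtain ⟨x, y, hxy⟩ := hv
  refine .of_mul_eq_one (x * w.1 + y * w.2) ?_
  simp only [det2] at huw hwv ⊢
  linear_combination (x * u.1 + y * u.2) * hwv + (x * v.1 + y * v.2) * huw + hxy

theorem exists_det2_eq_one_lt {u v : ℤ × ℤ} (hu : IsCoprime u.1 u.2)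
    (hv : IsCoprime v.1 v.2) (huv : 2 ≤ det2 u v) :
    ∃ w, det2 u w = 1 ∧ 0 < det2 w v ∧ det2 w v < det2 u v := by
  obtain ⟨a, b, hab⟩ := hu
  set w₀ : ℤ × ℤ := (-b, a)
  set w : ℤ × ℤ := w₀ - (det2 w₀ v / det2 u v) • u
  have huw : det2 u w = 1 := by
    simp only [w, w₀, det2, Prod.fst_sub, Prod.snd_sub, Prod.smul_fst, Prod.smul_snd, smul_eq_mul]
    linear_combination hab
  have hwv : det2 w v = det2 w₀ v % det2 u v := by
    rw [Int.emod_def]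
    simp only [w, det2, Prod.fst_sub, Prod.snd_sub, Prod.smul_fst, Prod.smul_snd, smul_eq_mul]
    ring
  have hpos : 0 < det2 u v := by omega
  refine ⟨w, huw, lt_of_le_of_ne ?_ fun h ↦ ?_, hwv ▸ Int.emod_lt_of_pos _ hpos⟩
  · exact hwv ▸ Int.emod_nonneg _ hpos.ne'
  · rcases Int.isUnit_iff.1 (isUnit_det2_of_det2_eq_zero huw h.symm hv) with h' | h' <;>
      omega

def ChainCovers (P : ℤ × ℤ → ℤ × ℤ → Prop) (u v : ℤ × ℤ) (S : Set (ℝ × ℝ)) : Prop :=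
  ∃ (m : ℕ) (c : ℕ → ℤ × ℤ), c 0 = u ∧ c m = v ∧ (∀ j < m, P (c j) (c (j + 1))) ∧
    S ⊆ ⋃ j ∈ Finset.range m, secR (c j) (c (j + 1))

namespace ChainCovers

variable {P Q : ℤ × ℤ → ℤ × ℤ → Prop} {u v w : ℤ × ℤ} {S T : Set (ℝ × ℝ)}

theorem refl (P : ℤ × ℤ → ℤ × ℤ → Prop) (u : ℤ × ℤ) : ChainCovers P u u ∅ :=
  ⟨0, fun _ ↦ u, rfl, rfl, by simp, Set.empty_subset _⟩

theorem single (h : P u v) : ChainCovers P u v (secR u v) :=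
  ⟨1, fun j ↦ if j = 0 then u else v, rfl, rfl, by simpa using h, by simp⟩

theorem mono (h : ChainCovers P u v S) (hPQ : ∀ a b, P a b → Q a b) (hTS : T ⊆ S) :
    ChainCovers Q u v T :=
  let ⟨m, c, h0, hm, hP, hS⟩ := h
  ⟨m, c, h0, hm, fun j hj ↦ hPQ _ _ (hP j hj), hTS.trans hS⟩

theorem append (h₁ : ChainCovers P u w S) (h₂ : ChainCovers P w v T) :
    ChainCovers P u v (S ∪ T) := by
  obtain ⟨m₁, c₁, h0, hm₁, hP₁, hS⟩ := h₁
  obtain ⟨m₂, c₂, hw, hm₂, hP₂, hT⟩ := h₂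
  set c : ℕ → ℤ × ℤ := fun j ↦ if j ≤ m₁ then c₁ j else c₂ (j - m₁)
  have hc₁ : ∀ j ≤ m₁, c j = c₁ j := fun j hj ↦ if_pos hj
  have hc₂ : ∀ k, c (m₁ + k) = c₂ k := by
    intro k
    rcases k.eq_zero_or_pos with rfl | hk
    · simp [c, hm₁, hw]
    · simp [c, show ¬m₁ + k ≤ m₁ by omega]
  refine ⟨m₁ + m₂, c, by simp [c, h0], hc₂ m₂ ▸ hm₂, fun j hj ↦ ?_, Set.union_subset ?_ ?_⟩
  · rcases lt_or_ge j m₁ with hj₁ | hj₁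
    · rw [hc₁ j hj₁.le, hc₁ (j + 1) hj₁]; exact hP₁ j hj₁
    · obtain ⟨k, rfl⟩ := Nat.exists_eq_add_of_le hj₁
      rw [hc₂, add_assoc, hc₂]; exact hP₂ k (by omega)
  · refine hS.trans (Set.iUnion₂_subset fun j hj ↦ ?_)
    have hj₁ := Finset.mem_range.1 hj
    rw [← hc₁ j hj₁.le, ← hc₁ (j + 1) hj₁]
    exact Set.subset_biUnion_of_mem (u := fun j ↦ secR (c j) (c (j + 1)))
      (Finset.mem_range.2 (by omega))
  · refine hT.trans (Set.iUnion₂_subset fun k hk ↦ ?_)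
    rw [← hc₂, ← hc₂, ← add_assoc]
    exact Set.subset_biUnion_of_mem (u := fun j ↦ secR (c j) (c (j + 1)))
      (Finset.mem_range.2 (by simp at hk; omega))

end ChainCovers

theorem chainCovers_regular {X : Set (ℝ × ℝ)} {u v : ℤ × ℤ} (hu : IsCoprime u.1 u.2)
    (hv : IsCoprime v.1 v.2) (huv : 0 < det2 u v) (hX : secR u v ⊆ X) :
    ChainCovers (fun a b ↦ det2 a b = 1 ∧ secR a b ⊆ X) u v (secR u v) := by
  obtain huv₁ | huv₂ : det2 u v = 1 ∨ 2 ≤ det2 u v := by omega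
  · exact .single ⟨huv₁, hX⟩
  obtain ⟨w, huw, hwv, hlt⟩ := exists_det2_eq_one_lt hu hv huv₂
  have hsplit := secR_eq_union (huw ▸ one_pos) hwv huv
  have hX₁ : secR u w ⊆ X := (hsplit ▸ Set.subset_union_left).trans hX
  have hX₂ : secR w v ⊆ X := (hsplit ▸ Set.subset_union_right).trans hX
  have := chainCovers_regular (isCoprime_right_of_det2_eq_one huw) hv hwv hX₂
  exact hsplit ▸ (ChainCovers.single ⟨huw, hX₁⟩).append this
termination_by (det2 u v).toNat

theorem secR_subset_of_not_strictly_between {u v a b : ℤ × ℤ} (huv : 0 < det2 u v)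
    (hab : 0 < det2 a b) (hmid : toReal (u + v) ∈ secR a b)
    (ha : ¬(0 < det2 u a ∧ 0 < det2 a v)) (hb : ¬(0 < det2 u b ∧ 0 < det2 b v)) :
    secR u v ⊆ secR a b := by
  rw [toReal_mem_secR_iff hab, det2_add_left, det2_add_right] at hmid
  have key : det2 a v * det2 u b - det2 a u * det2 v b = det2 a b * det2 u v := by
    simp only [det2]; ring
  have hpos := mul_pos hab huv
  rw [det2_swap a u] at ha
  rw [det2_swap v b] at hb
  obtain ⟨hau, hub, hav, hvb⟩ :
      0 ≤ det2 a u ∧ 0 ≤ det2 u b ∧ 0 ≤ det2 a v ∧ 0 ≤ det2 v b := by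
    rcases not_and_or.1 ha with ha | ha <;> rcases not_and_or.1 hb with hb | hb <;>
      refine ⟨?_, ?_, ?_, ?_⟩ <;> nlinarith
  exact secR_subset_secR hab hau hub hav hvb

theorem det2_pos_of_between_left {u v w a : ℤ × ℤ} (huv : 0 < det2 u v) (huw : 0 < det2 u w)
    (hwv : 0 < det2 w v) (hua : 0 < det2 u a) (haw : 0 < det2 a w) : 0 < det2 a v := by
  have key : det2 u w * det2 a v = det2 u a * det2 w v + det2 u v * det2 a w := by
    simp only [det2]; ring
  nlinarith

theorem det2_pos_of_between_right {u v w a : ℤ × ℤ} (huv : 0 < det2 u v) (huw : 0 < det2 u w)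
    (hwv : 0 < det2 w v) (hwa : 0 < det2 w a) (hav : 0 < det2 a v) : 0 < det2 u a := by
  have key : det2 w v * det2 u a = det2 u v * det2 w a + det2 u w * det2 a v := by
    simp only [det2]; ring
  nlinarith

def InFanSector (d : ℕ) (v : ℕ → ℤ × ℤ) (a b : ℤ × ℤ) : Prop :=
  ∃ j < d, secR a b ⊆ secR (v j) (v (j + 1))

def raysBetween (d : ℕ) (v : ℕ → ℤ × ℤ) (a b : ℤ × ℤ) : Finset ℕ :=
  (Finset.range d).filter fun t ↦ 0 < det2 a (v t) ∧ 0 < det2 (v t) b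

section raysBetween

variable {d t : ℕ} {v : ℕ → ℤ × ℤ} {a b : ℤ × ℤ}

theorem mem_raysBetween :
    t ∈ raysBetween d v a b ↔ t < d ∧ 0 < det2 a (v t) ∧ 0 < det2 (v t) b := by
  simp [raysBetween]

theorem raysBetween_ssubset_left (hab : 0 < det2 a b) (ht : t ∈ raysBetween d v a b) :
    raysBetween d v a (v t) ⊂ raysBetween d v a b := by
  rw [mem_raysBetween] at ht
  refine (Finset.ssubset_iff_of_subset fun s hs ↦ ?_).2 ⟨t, mem_raysBetween.2 ht, ?_⟩
  · rw [mem_raysBetween] at hs ⊢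
    exact ⟨hs.1, hs.2.1, det2_pos_of_between_left hab ht.2.1 ht.2.2 hs.2.1 hs.2.2⟩
  · simp [mem_raysBetween, det2_self]

theorem raysBetween_ssubset_right (hab : 0 < det2 a b) (ht : t ∈ raysBetween d v a b) :
    raysBetween d v (v t) b ⊂ raysBetween d v a b := by
  rw [mem_raysBetween] at ht
  refine (Finset.ssubset_iff_of_subset fun s hs ↦ ?_).2 ⟨t, mem_raysBetween.2 ht, ?_⟩
  · rw [mem_raysBetween] at hs ⊢
    exact ⟨hs.1, det2_pos_of_between_right hab ht.2.1 ht.2.2 hs.2.1 hs.2.2, hs.2.2⟩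
  · simp [mem_raysBetween, det2_self]

end raysBetween

namespace IsCompleteFan

variable {d : ℕ} {v : ℕ → ℤ × ℤ}

theorem isCoprime (h : IsCompleteFan d v) {i : ℕ} (hi : i ≤ d) : IsCoprime (v i).1 (v i).2 :=
  h.2.2.1 i hi

theorem det2_pos (h : IsCompleteFan d v) {i : ℕ} (hi : i < d) : 0 < det2 (v i) (v (i + 1)) :=
  h.2.2.2.1 i hi

theorem inFanSector_of_raysBetween_eq_empty (h : IsCompleteFan d v) {a b : ℤ × ℤ}
    (hab : 0 < det2 a b) (hno : raysBetween d v a b = ∅) : InFanSector d v a b := by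
  obtain ⟨hd, hcyc, -, hpos, hcov⟩ := h
  have hnot : ∀ t < d, ¬(0 < det2 a (v t) ∧ 0 < det2 (v t) b) := fun t ht hab ↦
    Finset.notMem_empty t (hno ▸ mem_raysBetween.2 ⟨ht, hab⟩)
  obtain ⟨t, ht, hmid⟩ := Set.mem_iUnion₂.1 (hcov.symm ▸ Set.mem_univ (toReal (a + b)))
  have ht' := Finset.mem_range.1 ht
  refine ⟨t, ht', secR_subset_of_not_strictly_between hab (hpos t ht') hmid (hnot t ht') ?_⟩
  rcases Nat.lt_or_ge (t + 1) d with hlt | hge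
  · exact hnot _ hlt
  · rw [show t + 1 = d by omega, hcyc]; exact hnot 0 hd

theorem chainCovers_sector (h : IsCompleteFan d v) {X : Set (ℝ × ℝ)} {a b : ℤ × ℤ}
    (ha : IsCoprime a.1 a.2) (hb : IsCoprime b.1 b.2) (hab : 0 < det2 a b)
    (hX : secR a b ⊆ X) :
    ChainCovers (fun x y ↦ det2 x y = 1 ∧ secR x y ⊆ X ∧ InFanSector d v x y) a b
      (secR a b) := by
  obtain hno | ⟨t, ht⟩ := (raysBetween d v a b).eq_empty_or_nonempty
  · obtain ⟨t, ht, hsub⟩ := h.inFanSector_of_raysBetween_eq_empty hab hno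
    exact (chainCovers_regular ha hb hab (Set.subset_inter hX hsub)).mono
      (fun _ _ ⟨h₁, h₂⟩ ↦ ⟨h₁, h₂.trans Set.inter_subset_left, t, ht,
        h₂.trans Set.inter_subset_right⟩) subset_rfl
  have hdec₁ := Finset.card_lt_card (raysBetween_ssubset_left hab ht)
  have hdec₂ := Finset.card_lt_card (raysBetween_ssubset_right hab ht)
  obtain ⟨htd, hat, htb⟩ := mem_raysBetween.1 ht
  have hvt := h.isCoprime htd.le
  have hsplit := secR_eq_union hat htb hab
  have h₁ := h.chainCovers_sector ha hvt hat ((hsplit ▸ Set.subset_union_left).trans hX)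
  have h₂ := h.chainCovers_sector hvt hb htb ((hsplit ▸ Set.subset_union_right).trans hX)
  exact hsplit ▸ h₁.append h₂
termination_by (raysBetween d v a b).card

end IsCompleteFan

theorem IsCompleteFan.chainCovers_biUnion {d₁ d₂ : ℕ} {v₁ v₂ : ℕ → ℤ × ℤ}
    (h₁ : IsCompleteFan d₁ v₁) (h₂ : IsCompleteFan d₂ v₂) :
    ∀ k ≤ d₁, ChainCovers
      (fun x y ↦ det2 x y = 1 ∧ InFanSector d₁ v₁ x y ∧ InFanSector d₂ v₂ x y) (v₁ 0) (v₁ k)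
      (⋃ i ∈ Finset.range k, secR (v₁ i) (v₁ (i + 1)))
  | 0, _ => by simpa using ChainCovers.refl _ _
  | k + 1, hk => by
    have hsector := h₂.chainCovers_sector (h₁.isCoprime (by omega)) (h₁.isCoprime hk)
      (h₁.det2_pos hk) subset_rfl
    rw [Finset.range_add_one, Finset.set_biUnion_insert, Set.union_comm]
    exact (h₁.chainCovers_biUnion h₂ k (by omega)).append
      (hsector.mono (fun _ _ ⟨h1, hsub, hfan⟩ ↦ ⟨h1, ⟨k, hk, hsub⟩, hfan⟩) subset_rfl)

/-- any two complete fans have a common refinement, which may be chosen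
regular (all consecutive determinants equal to 1). -/
theorem stmt17 (d₁ : ℕ) (v₁ : ℕ → ℤ × ℤ) (d₂ : ℕ) (v₂ : ℕ → ℤ × ℤ)
    (h₁ : IsCompleteFan d₁ v₁) (h₂ : IsCompleteFan d₂ v₂) :
    ∃ (d : ℕ) (v : ℕ → ℤ × ℤ), IsCompleteFan d v ∧
      (∀ i < d, (v i).1 * (v (i+1)).2 - (v i).2 * (v (i+1)).1 = 1) ∧
      FanRefines d v d₁ v₁ ∧ FanRefines d v d₂ v₂ := by
  obtain ⟨m, c, hc0, hcm, hpieces, hcover⟩ := h₁.chainCovers_biUnion h₂ d₁ le_rfl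
  obtain ⟨-, hcyc, -, -, hcov₁⟩ := h₁
  rw [hcov₁] at hcover
  rw [hcyc, ← hc0] at hcm
  have hdet : ∀ i < m, det2 (c i) (c (i + 1)) = 1 := fun i hi ↦ (hpieces i hi).1
  have hm : 1 ≤ m := by
    by_contra! hm
    simpa [Nat.lt_one_iff.1 hm] using hcover (Set.mem_univ 0)
  have hcoprime : ∀ i ≤ m, IsCoprime (c i).1 (c i).2 := by
    intro i hi
    rcases hi.lt_or_eq with hi | rfl
    · exact isCoprime_left_of_det2_eq_one (hdet i hi)
    · exact hcm ▸ isCoprime_left_of_det2_eq_one (hdet 0 hm)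
  exact ⟨m, c, ⟨hm, hcm, hcoprime, fun i hi ↦ zero_lt_one.trans_eq (hdet i hi).symm,
    Set.univ_subset_iff.1 hcover⟩, hdet, fun i hi ↦ (hpieces i hi).2.1,
    fun i hi ↦ (hpieces i hi).2.2⟩
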